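/- arXiv:2506.05945 — 2 statements merged into one kernel-verified Lean document; each statement's English description precedes it below -/
import Mathlib

section
/- The augmented IPW moment is unbiased for the potential outcome CDF for any bounded measurable adjustment function: for any bounded measurable $\mu: \mathcal{S}\times\mathcal{X}\to\mathbb{R}$, under $Y(w)\perp W \mid S$ and $(X \perp W)\mid S$, $\mathbb{E}\left[\frac{\mathbb{1}\{W=w\}(\mathbb{1}\{Y\le y\} - \mu(S,X))}{\pi_w(S)} + \mu(S,X)\right] = F_{Y(w)}(y)$. -/
open MeasureTheory ProbabilityTheory
open scoped ENNReal Classical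

/-!
Stratify by `S`. On the stratum `{S = s}`, conditional independence says that the law of
`(X, (Y v)_v)` restricted to `{W = w} ∩ {S = s}` is `π s` times its law restricted to `{S = s}`,
so weighting by `1 / π s` turns the integral of any bounded `g s (X, (Y v)_v)` over
`{W = w, S = s}` into its integral over `{S = s}`. On `{W = w}` we have `Y W = Y w`; applying this
to `g s (x, y') = 1{y' w ≤ y} - μadj s x`, the adjustment term cancels against the added
`μadj (S, X)`.
-/

section ConditionalReweighting

variable {Ω α E : Type*} [MeasurableSpace Ω] [MeasurableSpace α]
  [NormedAddCommGroup E] [NormedSpace ℝ E] {μ : Measure Ω} [IsFiniteMeasure μ]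
  {T : Ω → α} {A B : Set Ω}

theorem map_restrict_inter_eq_cond_smul (hT : Measurable T) (hA : MeasurableSet A)
    (hind : ∀ F, MeasurableSet F →
      μ (T ⁻¹' F ∩ B ∩ A) * μ A = μ (T ⁻¹' F ∩ A) * μ (B ∩ A)) :
    (μ.restrict (B ∩ A)).map T = μ[|A] B • (μ.restrict A).map T := by
  ext F hF
  rw [Measure.smul_apply, Measure.map_apply hT hF, Measure.map_apply hT hF,
    Measure.restrict_apply (hT hF), Measure.restrict_apply (hT hF), cond_apply hA, smul_eq_mul,
    ← Set.inter_assoc, Set.inter_comm A B]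
  by_cases hA0 : μ A = 0
  · rw [measure_mono_null (Set.inter_subset_right : T ⁻¹' F ∩ B ∩ A ⊆ A) hA0,
      measure_mono_null (Set.inter_subset_right : T ⁻¹' F ∩ A ⊆ A) hA0, mul_zero]
  calc μ (T ⁻¹' F ∩ B ∩ A) = μ (T ⁻¹' F ∩ B ∩ A) * μ A * (μ A)⁻¹ := by
        rw [mul_assoc, ENNReal.mul_inv_cancel hA0 (measure_ne_top μ A), mul_one]
    _ = (μ A)⁻¹ * μ (B ∩ A) * μ (T ⁻¹' F ∩ A) := by
        rw [hind F hF]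
        ring

theorem setIntegral_inter_eq_cond_smul (hT : Measurable T) (hA : MeasurableSet A)
    (hind : ∀ F, MeasurableSet F →
      μ (T ⁻¹' F ∩ B ∩ A) * μ A = μ (T ⁻¹' F ∩ A) * μ (B ∩ A))
    {f : α → E} (hf : StronglyMeasurable f) :
    ∫ ω in B ∩ A, f (T ω) ∂μ = (μ[|A] B).toReal • ∫ ω in A, f (T ω) ∂μ := by
  rw [← integral_map hT.aemeasurable hf.aestronglyMeasurable,
    map_restrict_inter_eq_cond_smul hT hA hind, integral_smul_measure,
    integral_map hT.aemeasurable hf.aestronglyMeasurable]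

end ConditionalReweighting

theorem integral_eq_sum_setIntegral_fiber {Ω 𝒮 E : Type*} [MeasurableSpace Ω] [Fintype 𝒮]
    [MeasurableSpace 𝒮] [MeasurableSingletonClass 𝒮] [NormedAddCommGroup E] [NormedSpace ℝ E]
    {μ : Measure Ω} {S : Ω → 𝒮} (hS : Measurable S) {f : Ω → E} (hf : Integrable f μ) :
    ∫ ω, f ω ∂μ = ∑ s, ∫ ω in {ω | S ω = s}, f ω ∂μ := by
  have hcover : (⋃ s, S ⁻¹' {s}) = Set.univ := by
    ext ω
    simp
  rw [← setIntegral_univ, ← hcover]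
  exact integral_iUnion_fintype (fun s => hS (measurableSet_singleton s))
    (pairwise_disjoint_fiber S) fun _ => hf.integrableOn

section InverseProbabilityWeighting

variable {Ω α 𝒲 𝒮 : Type*} [MeasurableSpace Ω] [MeasurableSpace α]
  [MeasurableSpace 𝒲] [MeasurableSingletonClass 𝒲]
  [Fintype 𝒮] [MeasurableSpace 𝒮] [MeasurableSingletonClass 𝒮]
  {μ : Measure Ω} [IsFiniteMeasure μ] {T : Ω → α} {W : Ω → 𝒲} {S : Ω → 𝒮} {w : 𝒲}
  {π : 𝒮 → ℝ} {g : 𝒮 → α → ℝ} {C : ℝ}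

theorem measurable_stratumwise (hS : Measurable S) (hT : Measurable T)
    (hg : ∀ s, Measurable (g s)) : Measurable fun ω => g (S ω) (T ω) :=
  (measurable_from_prod_countable_left (f := fun p : α × 𝒮 => g p.2 p.1) hg).comp
    (hT.prodMk hS)

theorem integrable_stratumwise_of_abs_le (hS : Measurable S) (hT : Measurable T)
    (hg : ∀ s, Measurable (g s)) (hgC : ∀ s a, |g s a| ≤ C) :
    Integrable (fun ω => g (S ω) (T ω)) μ :=
  .of_bound (measurable_stratumwise hS hT hg).aestronglyMeasurable C
    (ae_of_all _ fun ω => hgC (S ω) (T ω))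

theorem integrable_ipw_of_abs_le (hW : Measurable W) (hS : Measurable S) (hT : Measurable T)
    (hg : ∀ s, Measurable (g s)) (hgC : ∀ s a, |g s a| ≤ C) :
    Integrable (fun ω => if W ω = w then g (S ω) (T ω) / π (S ω) else 0) μ := by
  refine .of_bound ?_ (C * ∑ s, |π s|⁻¹) (ae_of_all _ fun ω => ?_)
  · exact ((measurable_stratumwise hS hT hg).div ((measurable_of_finite π).comp hS)).ite
      (hW (measurableSet_singleton w)) measurable_const |>.aestronglyMeasurable
  have hC : 0 ≤ C := (abs_nonneg _).trans (hgC (S ω) (T ω))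
  split_ifs
  · calc ‖g (S ω) (T ω) / π (S ω)‖ = |g (S ω) (T ω)| * |π (S ω)|⁻¹ := by
          rw [Real.norm_eq_abs, abs_div, div_eq_mul_inv]
      _ ≤ C * ∑ s, |π s|⁻¹ :=
          mul_le_mul (hgC _ _)
            (Finset.single_le_sum (fun s _ => inv_nonneg.2 (abs_nonneg (π s)))
              (Finset.mem_univ (S ω)))
            (inv_nonneg.2 (abs_nonneg _)) hC
  · simpa using mul_nonneg hC (Finset.sum_nonneg fun s _ => inv_nonneg.2 (abs_nonneg (π s)))

theorem integral_ipw_eq (hW : Measurable W) (hS : Measurable S) (hT : Measurable T)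
    (hind : ∀ s F, MeasurableSet F →
      μ (T ⁻¹' F ∩ {ω | W ω = w} ∩ {ω | S ω = s}) * μ {ω | S ω = s}
        = μ (T ⁻¹' F ∩ {ω | S ω = s}) * μ ({ω | W ω = w} ∩ {ω | S ω = s}))
    (hπ : ∀ s, π s = (μ[|{ω | S ω = s}] {ω | W ω = w}).toReal) (hπ0 : ∀ s, π s ≠ 0)
    (hg : ∀ s, Measurable (g s)) (hgC : ∀ s a, |g s a| ≤ C) :
    ∫ ω, (if W ω = w then g (S ω) (T ω) / π (S ω) else 0) ∂μ = ∫ ω, g (S ω) (T ω) ∂μ := by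
  rw [integral_eq_sum_setIntegral_fiber hS (integrable_ipw_of_abs_le hW hS hT hg hgC),
    integral_eq_sum_setIntegral_fiber hS (integrable_stratumwise_of_abs_le hS hT hg hgC)]
  refine Finset.sum_congr rfl fun s _ => ?_
  have hA : MeasurableSet {ω | S ω = s} := hS (measurableSet_singleton s)
  have hWw : MeasurableSet {ω | W ω = w} := hW (measurableSet_singleton w)
  calc ∫ ω in {ω | S ω = s}, (if W ω = w then g (S ω) (T ω) / π (S ω) else 0) ∂μ
      = ∫ ω in {ω | S ω = s}, {ω | W ω = w}.indicator (fun ω => (π s)⁻¹ * g s (T ω)) ω ∂μ := by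
        refine setIntegral_congr_fun hA fun ω (hω : S ω = s) => ?_
        simp only [Set.indicator_apply, Set.mem_ofPred_eq, hω, div_eq_inv_mul]
    _ = (π s)⁻¹ * ∫ ω in {ω | W ω = w} ∩ {ω | S ω = s}, g s (T ω) ∂μ := by
        rw [setIntegral_indicator hWw, Set.inter_comm, integral_const_mul]
    _ = ∫ ω in {ω | S ω = s}, g (S ω) (T ω) ∂μ := by
        rw [setIntegral_inter_eq_cond_smul hT hA (hind s) (hg s).stronglyMeasurable, ← hπ,
          smul_eq_mul, inv_mul_cancel_left₀ (hπ0 s)]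
        exact setIntegral_congr_fun hA fun ω (hω : S ω = s) => by rw [hω]

end InverseProbabilityWeighting

theorem aipw_moment_unbiased_for_cdf_general
    {Ω : Type*} [MeasurableSpace Ω] (μ : Measure Ω) [IsProbabilityMeasure μ]
    {𝒲 : Type*} [MeasurableSpace 𝒲] [MeasurableSingletonClass 𝒲]
    {𝒮 : Type*} [Fintype 𝒮] [MeasurableSpace 𝒮] [MeasurableSingletonClass 𝒮]
    {𝒳 : Type*} [MeasurableSpace 𝒳]
    (Y : 𝒲 → Ω → ℝ) (W : Ω → 𝒲) (S : Ω → 𝒮) (X : Ω → 𝒳)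
    (hY : ∀ v, Measurable (Y v)) (hW : Measurable W) (hS : Measurable S) (hX : Measurable X)
    -- joint conditional independence of W and (X, (Y(v))_v) given S:
    (hindep : ∀ (s : 𝒮) (v : 𝒲) (B : Set (𝒳 × (𝒲 → ℝ))), MeasurableSet B →
      μ ({ω | (X ω, fun u => Y u ω) ∈ B} ∩ {ω | W ω = v} ∩ {ω | S ω = s}) * μ {ω | S ω = s}
        = μ ({ω | (X ω, fun u => Y u ω) ∈ B} ∩ {ω | S ω = s})
            * μ ({ω | W ω = v} ∩ {ω | S ω = s}))
    (w : 𝒲) (π : 𝒮 → ℝ)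
    (hπ : ∀ s, π s = ((μ[|{ω | S ω = s}]) {ω | W ω = w}).toReal)
    (hπ01 : ∀ s, 0 < π s ∧ π s < 1)
    (μadj : 𝒮 → 𝒳 → ℝ)
    (hμadj_meas : Measurable (fun p : 𝒮 × 𝒳 => μadj p.1 p.2))
    (hμadj_bdd : ∃ C : ℝ, ∀ s x, |μadj s x| ≤ C) :
    ∀ y : ℝ,
      (∫ ω, ((if W ω = w then
                ((if Y (W ω) ω ≤ y then (1:ℝ) else 0) - μadj (S ω) (X ω)) / π (S ω)
              else 0)
            + μadj (S ω) (X ω)) ∂μ)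
        = (μ {ω | Y w ω ≤ y}).toReal := by
  intro y
  obtain ⟨C, hC⟩ := hμadj_bdd
  set T : Ω → 𝒳 × (𝒲 → ℝ) := fun ω => (X ω, fun u => Y u ω)
  set g : 𝒮 → 𝒳 × (𝒲 → ℝ) → ℝ := fun s p => (if p.2 w ≤ y then 1 else 0) - μadj s p.1
  have hT : Measurable T := hX.prodMk (measurable_pi_lambda _ hY)
  have hμadj : ∀ s, Measurable (μadj s) := fun s => hμadj_meas.comp measurable_prodMk_left
  have hg : ∀ s, Measurable (g s) := fun s =>
    .sub (.ite (measurableSet_le ((measurable_pi_apply w).comp measurable_snd) measurable_const)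
      measurable_const measurable_const) ((hμadj s).comp measurable_fst)
  have hgC : ∀ s p, |g s p| ≤ 1 + C := fun s p =>
    (abs_sub _ _).trans (add_le_add (by split_ifs <;> simp) (hC s p.1))
  have hm : Integrable (fun ω => μadj (S ω) (X ω)) μ :=
    integrable_stratumwise_of_abs_le hS hX hμadj hC
  calc _ = ∫ ω, ((if W ω = w then g (S ω) (T ω) / π (S ω) else 0) + μadj (S ω) (X ω)) ∂μ := by
        refine integral_congr_ae (ae_of_all _ fun ω => ?_)
        by_cases hWω : W ω = w <;> simp only [g, T, hWω, if_true, if_false]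
    _ = ∫ ω, g (S ω) (T ω) ∂μ + ∫ ω, μadj (S ω) (X ω) ∂μ := by
        rw [integral_add (integrable_ipw_of_abs_le hW hS hT hg hgC) hm,
          integral_ipw_eq hW hS hT (fun s => hindep s w) hπ (fun s => (hπ01 s).1.ne') hg hgC]
    _ = ∫ ω, {ω | Y w ω ≤ y}.indicator 1 ω ∂μ := by
        rw [← integral_add (integrable_stratumwise_of_abs_le hS hT hg hgC) hm]
        refine integral_congr_ae (ae_of_all _ fun ω => ?_)
        simp only [g, T, sub_add_cancel, Set.indicator_apply, Set.mem_ofPred_eq, Pi.one_apply]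
    _ = _ := integral_indicator_one (measurableSet_le (hY w) measurable_const)

/-- The augmented IPW moment is unbiased for the potential outcome CDF for any
bounded measurable adjustment function:
`E[ 1{W=w}(1{Y≤y} - μ(S,X))/π_w(S) + μ(S,X) ] = F_{Y(w)}(y)`. -/
theorem aipw_moment_unbiased_for_cdf
    {Ω : Type*} [MeasurableSpace Ω] (μ : Measure Ω) [IsProbabilityMeasure μ]
    {𝒲 : Type*} [Fintype 𝒲] [MeasurableSpace 𝒲] [MeasurableSingletonClass 𝒲]
    {𝒮 : Type*} [Fintype 𝒮] [MeasurableSpace 𝒮] [MeasurableSingletonClass 𝒮]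
    {𝒳 : Type*} [MeasurableSpace 𝒳]
    (Y : 𝒲 → Ω → ℝ) (W : Ω → 𝒲) (S : Ω → 𝒮) (X : Ω → 𝒳)
    (hY : ∀ v, Measurable (Y v)) (hW : Measurable W) (hS : Measurable S) (hX : Measurable X)
    (hpS : ∀ s : 𝒮, 0 < μ {ω | S ω = s})
    -- joint conditional independence of W and (X, (Y(v))_v) given S:
    (hindep : ∀ (s : 𝒮) (v : 𝒲) (B : Set (𝒳 × (𝒲 → ℝ))), MeasurableSet B →
      μ ({ω | (X ω, fun u => Y u ω) ∈ B} ∩ {ω | W ω = v} ∩ {ω | S ω = s}) * μ {ω | S ω = s}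
        = μ ({ω | (X ω, fun u => Y u ω) ∈ B} ∩ {ω | S ω = s})
            * μ ({ω | W ω = v} ∩ {ω | S ω = s}))
    (w : 𝒲) (π : 𝒮 → ℝ)
    (hπ : ∀ s, π s = ((μ[|{ω | S ω = s}]) {ω | W ω = w}).toReal)
    (hπ01 : ∀ s, 0 < π s ∧ π s < 1)
    (μadj : 𝒮 → 𝒳 → ℝ)
    (hμadj_meas : Measurable (fun p : 𝒮 × 𝒳 => μadj p.1 p.2))
    (hμadj_bdd : ∃ C : ℝ, ∀ s x, |μadj s x| ≤ C) :
    ∀ y : ℝ,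
      (∫ ω, ((if W ω = w then
                ((if Y (W ω) ω ≤ y then (1:ℝ) else 0) - μadj (S ω) (X ω)) / π (S ω)
              else 0)
            + μadj (S ω) (X ω)) ∂μ)
        = (μ {ω | Y w ω ≤ y}).toReal :=
  aipw_moment_unbiased_for_cdf_general μ Y W S X hY hW hS hX hindep w π hπ hπ01 μadj hμadj_meas
    hμadj_bdd
end

section
/- Conditional variance decomposition of the IPW score: if $Z = \frac{D\, (B - m)}{\pi} + m$ where $D$ is Bernoulli($\pi$) conditional on $(S,X)$ with $0<\pi=\pi(S)<1$, $B$ is a bounded random variable independent of $D$ given $(S,X)$, and $m = \mathbb{E}[B\mid S, X]$, then $\mathbb{E}[Z] = \mathbb{E}[B]$ and $\mathrm{Var}(Z) = \mathbb{E}\left[\frac{1-\pi(S)}{\pi(S)}\,\mathrm{Var}(B\mid S,X)\right] + \mathrm{Var}(B)$. -/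
open MeasureTheory ProbabilityTheory
open scoped ENNReal

/-!
Conditional independence of `D` and `B` given `𝔪 = σ(S, X)` makes `E[D f(B) | 𝔪]` factor as
`π(S) E[f(B) | 𝔪]`. Hence the correction term `D (B - m) / π(S)` has conditional mean `0`, so
`E[Z | 𝔪] = m`, and (as `D² = D`) conditional second moment `Var(B | 𝔪) / π(S)`. The law of total
variance, applied to `Z` and to `B`, whose conditional means agree, turns these into the claim.
-/

lemma MeasureTheory.memLp_top_of_forall_eq_zero_or_one {Ω : Type*} {mΩ : MeasurableSpace Ω}
    {μ : Measure Ω} {D : Ω → ℝ} (hD : AEStronglyMeasurable D μ)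
    (hD01 : ∀ ω, D ω = 0 ∨ D ω = 1) : MemLp D ∞ μ :=
  memLp_top_of_bound hD 1 (ae_of_all _ fun ω ↦ by rcases hD01 ω with h | h <;> simp [h])

namespace ProbabilityTheory

noncomputable def ipwScore {Ω : Type*} {mΩ : MeasurableSpace Ω} (μ : Measure Ω)
    (𝔪 : MeasurableSpace Ω) (D B p : Ω → ℝ) : Ω → ℝ :=
  D * (B - μ[B | 𝔪]) / p + μ[B | 𝔪]

variable {Ω : Type*} {𝔪 mΩ : MeasurableSpace Ω} {μ : Measure Ω} {D B p : Ω → ℝ}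

lemma ipwScore_eq_inv_mul_add :
    ipwScore μ 𝔪 D B p = p⁻¹ * (D * (B - μ[B | 𝔪])) + μ[B | 𝔪] := by
  rw [ipwScore, div_eq_inv_mul]

lemma memLp_ipwScore (hD_top : MemLp D ∞ μ) (hB2 : MemLp B 2 μ) (hp_inv : MemLp p⁻¹ ∞ μ) :
    MemLp (ipwScore μ 𝔪 D B p) 2 μ := by
  have hm2 : MemLp μ[B | 𝔪] 2 μ := hB2.condExp one_le_two
  rw [ipwScore_eq_inv_mul_add]
  exact (((hB2.sub hm2).mul hD_top (r := 2)).mul hp_inv (r := 2)).add hm2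

section CondIndep

variable [StandardBorelSpace Ω] {h𝔪 : 𝔪 ≤ mΩ} [IsFiniteMeasure μ]

/-- Under the regular conditional probability given `𝔪`, `D` and `B` are independent for almost
every `ω`, so the conditional expectation of `D * B` is an integral against a product measure. -/
theorem CondIndepFun.condExp_mul_ae_eq (hD : Measurable D) (hB : Measurable B)
    (hDi : Integrable D μ) (hBi : Integrable B μ) (hDBi : Integrable (D * B) μ)
    (h : CondIndepFun 𝔪 h𝔪 D B μ) :
    μ[D * B | 𝔪] =ᵐ[μ] μ[D | 𝔪] * μ[B | 𝔪] := by
  have hker := (condIndepFun_iff_map_prod_eq_prod_map_map hD hB).mp h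
  filter_upwards [ae_of_ae_trim h𝔪 hker, condExp_ae_eq_integral_condExpKernel h𝔪 hDBi,
    condExp_ae_eq_integral_condExpKernel h𝔪 hDi, condExp_ae_eq_integral_condExpKernel h𝔪 hBi]
    with ω hω hDB' hD' hB'
  set κ := condExpKernel μ 𝔪 ω
  calc μ[D * B | 𝔪] ω = ∫ z, z.1 * z.2 ∂(κ.map fun ω ↦ (D ω, B ω)) := by
        rw [hDB', integral_map (hD.prodMk hB).aemeasurable (by fun_prop)]; rfl
    _ = ∫ z, z.1 * z.2 ∂((κ.map D).prod (κ.map B)) := by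
        rw [← Kernel.map_apply _ (hD.prodMk hB), hω, Kernel.prod_apply, Kernel.map_apply _ hD,
          Kernel.map_apply _ hB]
    _ = μ[D | 𝔪] ω * μ[B | 𝔪] ω := by
        rw [integral_prod_mul (fun x ↦ x) (fun y ↦ y), integral_map hD.aemeasurable (by fun_prop),
          integral_map hB.aemeasurable (by fun_prop), hD', hB']

theorem CondIndepFun.condExp_mul_sub_condExp_ae_eq_zero (hD : Measurable D) (hB : Measurable B)
    (hD_top : MemLp D ∞ μ) (hBi : Integrable B μ) (h : CondIndepFun 𝔪 h𝔪 D B μ) :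
    μ[D * (B - μ[B | 𝔪]) | 𝔪] =ᵐ[μ] 0 := by
  have hDi : Integrable D μ := hD_top.integrable le_top
  have hDB : Integrable (D * B) μ := hBi.mul_of_top_right hD_top
  have hDm : Integrable (D * μ[B | 𝔪]) μ := integrable_condExp.mul_of_top_right hD_top
  rw [mul_sub]
  filter_upwards [condExp_sub hDB hDm (m := 𝔪), h.condExp_mul_ae_eq hD hB hDi hBi hDB,
    condExp_mul_of_stronglyMeasurable_right stronglyMeasurable_condExp hDm hDi]
    with ω hsub hDB' hDm'
  rw [hsub, Pi.sub_apply, hDB', hDm', Pi.zero_apply, sub_self]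

theorem CondIndepFun.condExp_mul_sub_condExp_sq_ae_eq (hD : Measurable D) (hB : Measurable B)
    (hD_top : MemLp D ∞ μ) (hB2 : MemLp B 2 μ) (h : CondIndepFun 𝔪 h𝔪 D B μ) :
    μ[D * (B - μ[B | 𝔪]) ^ 2 | 𝔪] =ᵐ[μ] μ[D | 𝔪] * Var[B; μ | 𝔪] := by
  set m := μ[B | 𝔪]
  have hDi : Integrable D μ := hD_top.integrable le_top
  have hm2 : MemLp m 2 μ := hB2.condExp one_le_two
  have hDB2 : Integrable (D * B ^ 2) μ := hB2.integrable_sq.mul_of_top_right hD_top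
  have hDBm : MemLp (D * (B - m)) 2 μ := (hB2.sub hm2).mul hD_top
  have hmDBm : Integrable (m * (D * (B - m))) μ := hm2.integrable_mul hDBm
  have hm2D : Integrable (m ^ 2 * D) μ := hm2.integrable_sq.mul_of_top_left hD_top
  have h2mDBm : Integrable (2 * (m * (D * (B - m)))) μ := hmDBm.const_mul 2
  have hDB2_cond : μ[D * B ^ 2 | 𝔪] =ᵐ[μ] μ[D | 𝔪] * μ[B ^ 2 | 𝔪] :=
    (h.comp measurable_id (measurable_id.pow_const (2 : ℕ))).condExp_mul_ae_eq hD
      (hB.pow_const 2) hDi hB2.integrable_sq hDB2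
  have hexpand : D * (B - m) ^ 2 = D * B ^ 2 - 2 * (m * (D * (B - m))) - m ^ 2 * D := by ring
  rw [hexpand]
  filter_upwards [condExp_sub (hDB2.sub h2mDBm) hm2D (m := 𝔪), condExp_sub hDB2 h2mDBm (m := 𝔪),
    hDB2_cond, condExp_ofNat (m := 𝔪) (μ := μ) 2 (m * (D * (B - m))),
    condExp_mul_of_stronglyMeasurable_left stronglyMeasurable_condExp hmDBm
      (hDBm.integrable one_le_two),
    h.condExp_mul_sub_condExp_ae_eq_zero hD hB hD_top (hB2.integrable one_le_two),
    condExp_mul_of_stronglyMeasurable_left (stronglyMeasurable_condExp.pow 2) hm2D hDi,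
    condVar_ae_eq_condExp_sq_sub_sq_condExp h𝔪 hB2] with ω h1 h2 h3 h4 h5 h6 h7 h8
  simp only [Pi.sub_apply, Pi.mul_apply, Pi.pow_apply, Pi.zero_apply] at h1 h2 h3 h4 h5 h6 h7 h8 ⊢
  rw [h1, h2, h3, h4, h5, h6, h7, h8]
  ring

lemma condExp_ipwScore (hD : Measurable D) (hB : Measurable B) (hD_top : MemLp D ∞ μ)
    (hBi : Integrable B μ) (hp : Measurable[𝔪] p) (hp_inv : MemLp p⁻¹ ∞ μ)
    (h : CondIndepFun 𝔪 h𝔪 D B μ) :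
    μ[ipwScore μ 𝔪 D B p | 𝔪] =ᵐ[μ] μ[B | 𝔪] := by
  have hDBm : Integrable (D * (B - μ[B | 𝔪])) μ :=
    (hBi.sub integrable_condExp).mul_of_top_right hD_top
  have hw : Integrable (p⁻¹ * (D * (B - μ[B | 𝔪]))) μ := hDBm.mul_of_top_right hp_inv
  rw [ipwScore_eq_inv_mul_add]
  filter_upwards [condExp_add hw integrable_condExp 𝔪,
    condExp_mul_of_stronglyMeasurable_left hp.inv.stronglyMeasurable hw hDBm,
    h.condExp_mul_sub_condExp_ae_eq_zero hD hB hD_top hBi] with ω h1 h2 h3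
  rw [h1, Pi.add_apply, h2, Pi.mul_apply, h3,
    condExp_of_stronglyMeasurable h𝔪 stronglyMeasurable_condExp integrable_condExp]
  simp

lemma integral_ipwScore (hD : Measurable D) (hB : Measurable B) (hD_top : MemLp D ∞ μ)
    (hBi : Integrable B μ) (hp : Measurable[𝔪] p) (hp_inv : MemLp p⁻¹ ∞ μ)
    (h : CondIndepFun 𝔪 h𝔪 D B μ) :
    ∫ ω, ipwScore μ 𝔪 D B p ω ∂μ = ∫ ω, B ω ∂μ := by
  rw [← integral_condExp h𝔪, integral_congr_ae (condExp_ipwScore hD hB hD_top hBi hp hp_inv h),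
    integral_condExp h𝔪]

lemma condVar_ipwScore (hD : Measurable D) (hB : Measurable B) (hD01 : ∀ ω, D ω = 0 ∨ D ω = 1)
    (hB2 : MemLp B 2 μ) (hp : Measurable[𝔪] p) (hp_inv : MemLp p⁻¹ ∞ μ)
    (hDp : μ[D | 𝔪] =ᵐ[μ] p) (h : CondIndepFun 𝔪 h𝔪 D B μ) :
    Var[ipwScore μ 𝔪 D B p; μ | 𝔪] =ᵐ[μ] p⁻¹ * Var[B; μ | 𝔪] := by
  have hD_top : MemLp D ∞ μ := memLp_top_of_forall_eq_zero_or_one hD.aestronglyMeasurable hD01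
  have hDBm2 : Integrable (D * (B - μ[B | 𝔪]) ^ 2) μ :=
    (hB2.sub (hB2.condExp one_le_two)).integrable_sq.mul_of_top_right hD_top
  have hcentered : (ipwScore μ 𝔪 D B p - μ[ipwScore μ 𝔪 D B p | 𝔪]) ^ 2
      =ᵐ[μ] p⁻¹ ^ 2 * (D * (B - μ[B | 𝔪]) ^ 2) := by
    filter_upwards [condExp_ipwScore hD hB hD_top (hB2.integrable one_le_two) hp hp_inv h]
      with ω hω
    simp only [Pi.sub_apply, Pi.mul_apply, Pi.pow_apply, Pi.inv_apply]
    rw [hω]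
    simp only [ipwScore, Pi.add_apply, Pi.div_apply, Pi.mul_apply, Pi.sub_apply]
    rcases hD01 ω with hD0 | hD1
    · simp [hD0]
    · rw [hD1]; ring
  calc Var[ipwScore μ 𝔪 D B p; μ | 𝔪]
      =ᵐ[μ] μ[p⁻¹ ^ 2 * (D * (B - μ[B | 𝔪]) ^ 2) | 𝔪] := condExp_congr_ae hcentered
    _ =ᵐ[μ] p⁻¹ ^ 2 * μ[D * (B - μ[B | 𝔪]) ^ 2 | 𝔪] :=
      condExp_mul_of_stronglyMeasurable_left (hp.inv.pow_const 2).stronglyMeasurable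
        (hDBm2.mul_of_top_right (by simpa only [sq] using hp_inv.mul hp_inv)) hDBm2
    _ =ᵐ[μ] p⁻¹ * Var[B; μ | 𝔪] := by
      filter_upwards [h.condExp_mul_sub_condExp_sq_ae_eq hD hB hD_top hB2, hDp] with ω h1 h2
      simp only [Pi.mul_apply, Pi.pow_apply, Pi.inv_apply, h1, h2]
      rcases eq_or_ne (p ω) 0 with hp0 | hp0
      · simp [hp0]
      · field_simp

end CondIndep

lemma variance_ipwScore [StandardBorelSpace Ω] {h𝔪 : 𝔪 ≤ mΩ} [IsProbabilityMeasure μ]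
    (hD : Measurable D) (hB : Measurable B) (hD01 : ∀ ω, D ω = 0 ∨ D ω = 1)
    (hB2 : MemLp B 2 μ) (hp : Measurable[𝔪] p) (hp_inv : MemLp p⁻¹ ∞ μ)
    (hDp : μ[D | 𝔪] =ᵐ[μ] p) (h : CondIndepFun 𝔪 h𝔪 D B μ) :
    Var[ipwScore μ 𝔪 D B p; μ] = μ[(p⁻¹ - 1) * Var[B; μ | 𝔪]] + Var[B; μ] := by
  have hD_top : MemLp D ∞ μ := memLp_top_of_forall_eq_zero_or_one hD.aestronglyMeasurable hD01
  have hsplit : μ[(p⁻¹ - 1) * Var[B; μ | 𝔪]] = μ[p⁻¹ * Var[B; μ | 𝔪]] - μ[Var[B; μ | 𝔪]] := by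
    rw [sub_one_mul]
    exact integral_sub (integrable_condVar.mul_of_top_right hp_inv) integrable_condVar
  rw [hsplit, ← integral_condVar_add_variance_condExp h𝔪 (memLp_ipwScore hD_top hB2 hp_inv),
    ← integral_condVar_add_variance_condExp h𝔪 hB2,
    integral_congr_ae (condVar_ipwScore hD hB hD01 hB2 hp hp_inv hDp h),
    variance_congr (condExp_ipwScore hD hB hD_top (hB2.integrable one_le_two) hp hp_inv h)]
  ring

end ProbabilityTheory

/-- Conditional variance decomposition of the IPW score: if
`Z = D(B - m)/π(S) + m` with `D` conditionally Bernoulli(`π(S)`) given `(S,X)`,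
`B ∈ [0,1]` conditionally independent of `D` given `(S,X)` and `m = E[B | S,X]`, then
`E[Z] = E[B]` and `Var(Z) = E[(1-π(S))/π(S) · Var(B | S,X)] + Var(B)`. -/
theorem ipw_score_conditional_variance_decomposition
    {Ω : Type*} [mΩ : MeasurableSpace Ω] [hSB : StandardBorelSpace Ω]
    (μ : Measure Ω) [hμ : IsProbabilityMeasure μ]
    {𝒮 : Type*} [Fintype 𝒮] [MeasurableSpace 𝒮] [MeasurableSingletonClass 𝒮]
    {𝒳 : Type*} [MeasurableSpace 𝒳]
    (S : Ω → 𝒮) (X : Ω → 𝒳)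
    (𝔪 : MeasurableSpace Ω)
    (h𝔪 : 𝔪 = MeasurableSpace.comap (fun ω => (S ω, X ω)) inferInstance)
    (h𝔪le : 𝔪 ≤ mΩ)
    (D B : Ω → ℝ) (hD : @Measurable Ω ℝ mΩ _ D) (hB : @Measurable Ω ℝ mΩ _ B)
    (hD01 : ∀ ω, D ω = 0 ∨ D ω = 1) (hB01 : ∀ ω, B ω ∈ Set.Icc (0:ℝ) 1)
    (π : 𝒮 → ℝ) (hπ01 : ∀ s, 0 < π s ∧ π s < 1)
    -- D is Bernoulli(π(S)) conditionally on (S, X):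
    (hbern : μ[D | 𝔪] =ᵐ[μ] fun ω => π (S ω))
    -- D and B are conditionally independent given (S, X):
    (hci : @CondIndepFun Ω 𝔪 mΩ hSB h𝔪le ℝ ℝ _ _ D B μ (by infer_instance))
    (m Z : Ω → ℝ)
    (hm : m = μ[B | 𝔪])
    (hZ : ∀ ω, Z ω = D ω * (B ω - m ω) / π (S ω) + m ω) :
    (∫ ω, Z ω ∂μ) = (∫ ω, B ω ∂μ)
      ∧ variance Z μ
          = (∫ ω, ((1 - π (S ω)) / π (S ω))
                * ((μ[fun ω' => (B ω') ^ 2 | 𝔪]) ω - (m ω) ^ 2) ∂μ)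
            + variance B μ := by
  subst hm
  obtain rfl : Z = ipwScore μ 𝔪 D B (fun ω ↦ π (S ω)) := funext hZ
  have hp : Measurable[𝔪] fun ω ↦ π (S ω) := by
    subst h𝔪
    exact (measurable_of_finite π).comp (measurable_fst.comp (Measurable.of_comap_le le_rfl))
  have hp_inv : MemLp (fun ω ↦ π (S ω))⁻¹ ∞ μ := by
    obtain ⟨C, hC⟩ := (Set.finite_range fun s ↦ ‖(π s)⁻¹‖).bddAbove
    exact memLp_top_of_bound (hp.inv.mono h𝔪le le_rfl).aestronglyMeasurable C
      (ae_of_all _ fun ω ↦ hC ⟨S ω, rfl⟩)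
  have hB2 : MemLp B 2 μ := memLp_of_bounded (ae_of_all _ hB01) hB.aestronglyMeasurable 2
  have hD_top : MemLp D ∞ μ := memLp_top_of_forall_eq_zero_or_one hD.aestronglyMeasurable hD01
  refine ⟨integral_ipwScore hD hB hD_top (hB2.integrable one_le_two) hp hp_inv hci, ?_⟩
  rw [variance_ipwScore hD hB hD01 hB2 hp hp_inv hbern hci]
  congr 1
  refine integral_congr_ae ?_
  filter_upwards [condVar_ae_eq_condExp_sq_sub_sq_condExp h𝔪le hB2] with ω hω
  have hπ := (hπ01 (S ω)).1.ne'
  simp only [Pi.mul_apply, Pi.sub_apply, Pi.inv_apply, Pi.one_apply, hω]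
  field_simp
  rfl
end
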